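/- Let κ be an uncountable cardinal with κ^{<κ} = κ, let R be an analytic quasi-order on ^κ2, let T be a DST-tree on 2×2×κ satisfying, with respect to R, properties (i)–(v) of the tree normal form (listed in the context), and let # be a map as in the context. Then for all x, y ∈ ^κ2: (1) if S_T^x ≤_max S_T^y then x R y; (2) if (x,y,ξ) ∈ [S_T], then the map φ defined by φ(s) = s ⊕ (ξ↾lh(s)) is Lipschitz and injective, witnesses S_T^x ≤_max S_T^y, and satisfies #(s) ≤ #(φ(s)) for every s of successor length. In particular, for all x, y: x R y if and only if S_T^x ≤_max S_T^y. -/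

import Mathlib

noncomputable section

/-- A transfinite sequence: a function defined on a proper initial segment of the
ordinals (the first component is the length). -/
def ISeq (A : Type*) := Σ γ : Ordinal, ({o : Ordinal // o < γ} → A)

namespace ISeq

/-- Truncation of a sequence `s` to length `δ` (if `δ` is at least the length of `s`,
this is `s` itself). -/
def restr {A : Type*} (s : ISeq A) (δ : Ordinal) : ISeq A :=
  ⟨min δ s.1, fun x => s.2 ⟨x.1, lt_of_lt_of_le x.2 (min_le_right _ _)⟩⟩

/-- The empty sequence. -/
def emptySeq (A : Type*) : ISeq A := ⟨0, fun x => absurd x.2 (not_lt.mpr (zero_le (a := x.1)))⟩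

/-- The sequence `⟨a⟩⌢s` obtained by prepending `a` to `s`. -/
def cons {A : Type*} (a : A) (s : ISeq A) : ISeq A :=
  ⟨1 + s.1, fun x =>
    if h : x.1 < 1 then a
    else
      s.2 ⟨x.1 - 1, by
        have h1 : (1 : Ordinal) ≤ x.1 := not_lt.mp h
        have h2 : (1 : Ordinal) + (x.1 - 1) < 1 + s.1 := by
          rw [Ordinal.add_sub_cancel_of_le h1]; exact x.2
        exact (add_lt_add_iff_left (1 : Ordinal)).mp h2⟩⟩

/-- The sequence `s⁻`: if `s` has finite length `n + 1` this is `s` restricted to `n`;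
if `s` has infinite length this is `s` itself. -/
def mnus {A : Type*} (s : ISeq A) : ISeq A :=
  if s.1 < Ordinal.omega0 then s.restr (s.1 - 1) else s

/-- The canonical extension of an ordinal sequence to a total function on the
ordinals, with value `0` beyond the length. -/
def ext' (s : ISeq Ordinal) : Ordinal → Ordinal :=
  fun α => if h : α < s.1 then s.2 ⟨α, h⟩ else 0

end ISeq

/-- The constant-`0` sequence `0^{(γ)}` of length `γ`. -/
def zseq (γ : Ordinal) : ISeq Ordinal := ⟨γ, fun _ => 0⟩

/-- `Hes` is the Hessenberg pairing of ordinals: the unique surjective binary function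
on ordinals such that `Hes α β ≤ Hes α' β'` iff `max α β < max α' β'`, or the maxima
are equal and `(α, β)` is lexicographically at most `(α', β')`. -/
def HesProp (Hes : Ordinal → Ordinal → Ordinal) : Prop :=
  (∀ δ : Ordinal, ∃ α β : Ordinal, Hes α β = δ) ∧
    ∀ α β α' β' : Ordinal,
      Hes α β ≤ Hes α' β' ↔
        (max α β < max α' β' ∨
          (max α β = max α' β' ∧ (α < α' ∨ (α = α' ∧ β ≤ β'))))

/-- The pointwise formula for the map `⊕` on pairs of ordinal sequences of the same
length (sequences are coded as total functions on the ordinals).  With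
`ρ(γ,γ') = Hes(γ,γ') + 1`, the recursive definition of `⊕` gives
`(s ⊕ t)(0) = ρ(s 0, t 0)` and, for positions `α > 0`,
`(s ⊕ t)(α) = ρ((sup_{β ≤ α} s β) + ω, ρ(s α, t α))`. -/
def oplusPt (Hes : Ordinal → Ordinal → Ordinal) (s t : Ordinal → Ordinal)
    (α : Ordinal) : Ordinal :=
  if α = 0 then Hes (s 0) (t 0) + 1
  else Hes (sSup (s '' Set.Iic α) + Ordinal.omega0) (Hes (s α) (t α) + 1) + 1

/-- The map `⊕` on pairs of ordinal sequences of the same length. -/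
def oplusSeq (Hes : Ordinal → Ordinal → Ordinal) (s t : ISeq Ordinal) : ISeq Ordinal :=
  ⟨s.1, fun α => oplusPt Hes s.ext' t.ext' α.1⟩

/-- The variant `⊕̃` of `⊕`: `(s ⊕̃ t)(γ) = ((0⌢s) ⊕ (0⌢t))(1 + γ)`. -/
def oplusTilde (Hes : Ordinal → Ordinal → Ordinal) (s t : ISeq Ordinal) : ISeq Ordinal :=
  ⟨s.1, fun α => oplusPt Hes (ISeq.cons 0 s).ext' (ISeq.cons 0 t).ext' (1 + α.1)⟩

/-- Triples of sequences, coding elements of `^{<κ}(2 × 2 × κ)`. -/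
abbrev Tri := ISeq Bool × ISeq Bool × ISeq Ordinal

/-- The empty triple. -/
def emptyTri : Tri := (ISeq.emptySeq Bool, ISeq.emptySeq Bool, ISeq.emptySeq Ordinal)

/-- Simultaneous truncation of a triple. -/
def Tri.restr (p : Tri) (δ : Ordinal) : Tri :=
  (p.1.restr δ, p.2.1.restr δ, p.2.2.restr δ)

/-- `T` is a descriptive set-theoretic tree on `2 × 2 × κ`: its elements are triples
of sequences of a common length `< κ`, with third coordinate valued in `κ`, and `T`
is closed under simultaneous restriction. -/
def IsTree (κ : Cardinal) (T : Set Tri) : Prop :=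
  (∀ p ∈ T, p.1.1 = p.2.1.1 ∧ p.1.1 = p.2.2.1 ∧ p.1.1 < κ.ord ∧ ∀ x, p.2.2.2 x < κ.ord) ∧
    ∀ p ∈ T, ∀ δ : Ordinal, Tri.restr p δ ∈ T

/-- The index set `κ`, i.e. the ordinals below `κ`. -/
abbrev KIdx (κ : Cardinal) := {o : Ordinal // o < κ.ord}

/-- The length-`γ` initial segment of a total function `x : κ → 2`. -/
def brB (κ : Cardinal) (x : KIdx κ → Bool) (γ : Ordinal) : ISeq Bool :=
  ⟨γ, fun α => if h : α.1 < κ.ord then x ⟨α.1, h⟩ else false⟩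

/-- The length-`γ` initial segment of a total function `ξ : κ → Ordinal`. -/
def brO (κ : Cardinal) (ξ : KIdx κ → Ordinal) (γ : Ordinal) : ISeq Ordinal :=
  ⟨γ, fun α => if h : α.1 < κ.ord then ξ ⟨α.1, h⟩ else 0⟩

/-- The projection `proj[T]` of the body of a tree `T` on `2 × 2 × κ`:
`(x, y) ∈ proj[T]` iff there is `ξ ∈ ^κκ` with `(x↾γ, y↾γ, ξ↾γ) ∈ T` for all `γ < κ`. -/
def projT (κ : Cardinal) (T : Set Tri) (x y : KIdx κ → Bool) : Prop :=
  ∃ ξ : KIdx κ → Ordinal, (∀ α, ξ α < κ.ord) ∧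
    ∀ γ : Ordinal, γ < κ.ord → (brB κ x γ, brB κ y γ, brO κ ξ γ) ∈ T

/-- The tree `T̂ = T ∪ {(u, u, 0^{(lh u)}) : u ∈ ^{<κ}2}`. -/
def hatT (κ : Cardinal) (T : Set Tri) : Set Tri :=
  T ∪ {p | ∃ u : ISeq Bool, u.1 < κ.ord ∧ p = (u, u, zseq u.1)}

/-- The trees `S_T^n`. -/
def STn (Hes : Ordinal → Ordinal → Ordinal) (κ : Cardinal) (T : Set Tri) : ℕ → Set Tri
  | 0 =>
    {emptyTri} ∪
      {p | ∃ (u v : ISeq Bool) (s : ISeq Ordinal),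
        p = (u, v, ISeq.cons 0 s) ∧ (u.mnus, v.mnus, s) ∈ hatT κ T}
  | n + 1 =>
    {emptyTri} ∪
      {p | ∃ (u v : ISeq Bool) (s : ISeq Ordinal),
        p = (u, v, ISeq.cons ((n : Ordinal) + 1) s) ∧
          (u, v, ISeq.cons (n : Ordinal) s) ∈ STn Hes κ T n} ∪
      {p | ∃ (u w : ISeq Bool) (s t : ISeq Ordinal),
        p = (u, w, ISeq.cons ((n : Ordinal) + 1) (oplusTilde Hes s t)) ∧
          ∃ v : ISeq Bool, (u, v, ISeq.cons (n : Ordinal) s) ∈ STn Hes κ T n ∧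
            (v, w, ISeq.cons (n : Ordinal) t) ∈ STn Hes κ T n}

/-- The tree `S_T = ⋃ₙ S_T^n`. -/
def STfull (Hes : Ordinal → Ordinal → Ordinal) (κ : Cardinal) (T : Set Tri) : Set Tri :=
  ⋃ n : ℕ, STn Hes κ T n

/-- `s` is a sequence in `^{<κ}κ`: its length and its values are below `κ`. -/
def InDom (κ : Cardinal) (s : ISeq Ordinal) : Prop :=
  s.1 < κ.ord ∧ ∀ α, s.2 α < κ.ord

/-- `t` end-extends `s`. -/
def ExtOf {A : Type*} (s t : ISeq A) : Prop := s.1 ≤ t.1 ∧ t.restr s.1 = s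

/-- `φ` is a Lipschitz (monotone and length-preserving) injective map from
`^{<κ}κ` to `^{<κ}κ`. -/
def IsLipInj (κ : Cardinal) (φ : ISeq Ordinal → ISeq Ordinal) : Prop :=
  (∀ s, InDom κ s → InDom κ (φ s)) ∧
    (∀ s, InDom κ s → (φ s).1 = s.1) ∧
    (∀ s t, InDom κ s → InDom κ t → ExtOf s t → ExtOf (φ s) (φ t)) ∧
    (∀ s t, InDom κ s → InDom κ t → φ s = φ t → s = t)

/-- The quasi-order `≤_max` on DST-trees on `2 × κ`: there is a Lipschitz injective
`φ : ^{<κ}κ → ^{<κ}κ` with `(u, s) ∈ 𝒯 → (u, φ s) ∈ 𝒯'`. -/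
def LeMax (κ : Cardinal) (𝒯 𝒯' : Set (ISeq Bool × ISeq Ordinal)) : Prop :=
  ∃ φ : ISeq Ordinal → ISeq Ordinal, IsLipInj κ φ ∧
    ∀ u s, (u, s) ∈ 𝒯 → (u, φ s) ∈ 𝒯'

/-- The tree `S_T^x = {(u, s) : (u, x↾lh(u), s) ∈ S_T}`. -/
def STx (Hes : Ordinal → Ordinal → Ordinal) (κ : Cardinal) (T : Set Tri)
    (x : KIdx κ → Bool) : Set (ISeq Bool × ISeq Ordinal) :=
  {p | (p.1, brB κ x p.1.1, p.2) ∈ STfull Hes κ T}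

/-- The map `φ(s) = s ⊕ (ξ ↾ lh s)`. -/
def phiMap (Hes : Ordinal → Ordinal → Ordinal) (κ : Cardinal)
    (ξ : KIdx κ → Ordinal) (s : ISeq Ordinal) : ISeq Ordinal :=
  oplusSeq Hes s (brO κ ξ s.1)

/-!
If `φ` witnesses `S_T^x ≤_max S_T^y`, then, as `(x↾γ, x↾γ, 0^{(γ)}) ∈ S_T` by (ii), each
`(x↾γ, y↾γ, φ(0^{(γ)}))` lies in `S_T`; since `φ` is Lipschitz the sequences `φ(0^{(γ)})`
cohere into a branch `ξ` with `(x, y, ξ) ∈ [S_T]`, so `x R y` by (v).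

Conversely, for `(x, y, ξ) ∈ [S_T]`, property (iii) composes `(u, x↾lh u, s) ∈ S_T` with
`(x↾lh s, y↾lh s, ξ↾lh s) ∈ S_T` into `(u, y↾lh u, s ⊕ ξ↾lh s) ∈ S_T`. The map
`s ↦ s ⊕ ξ↾lh s` is Lipschitz because `(s ⊕ t)(α)` only depends on `s↾(α+1)` and
`t(α)`, injective because the Hessenberg pairing is, and maps `^{<κ}κ` into itself because
`κ^{<κ} = κ` forces `κ` to be regular, so the suprema in the definition of `⊕` stay
below `κ`.
-/

universe u

theorem Cardinal.isRegular_of_powerlt_self {κ : Cardinal} (hκ : Cardinal.aleph0 ≤ κ)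
    (hks : κ ^< κ = κ) : κ.IsRegular := by
  refine ⟨hκ, not_lt.1 fun hcof => ?_⟩
  have := (Cardinal.lt_power_cof_ord hκ).trans_le (Cardinal.le_powerlt κ hcof)
  exact this.ne hks.symm

theorem Cardinal.IsRegular.sSup_image_Iic_lt_ord {κ : Cardinal.{u}} (hκ : κ.IsRegular)
    {f : Ordinal.{u} → Ordinal.{u}} {α : Ordinal.{u}} (hf : ∀ β ≤ α, f β < κ.ord)
    (hα : α < κ.ord) : sSup (f '' Set.Iic α) < κ.ord := by
  refine Ordinal.sSup_lt_of_lt_cof ?_ (by simpa using hf)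
  rw [← Ordinal.lift_cof, hκ.cof_ord]
  refine Cardinal.mk_image_le.trans_lt ?_
  rw [← Order.Iio_succ, Cardinal.mk_Iio_ordinal, Cardinal.lift_lt, ← Cardinal.lt_ord]
  exact (Cardinal.isSuccLimit_ord hκ.aleph0_le).succ_lt hα

theorem HesProp.le_iff_toLex_le {Hes : Ordinal → Ordinal → Ordinal} (hHes : HesProp Hes)
    (a b c d : Ordinal) :
    Hes a b ≤ Hes c d ↔ toLex (max a b, toLex (a, b)) ≤ toLex (max c d, toLex (c, d)) := by
  rw [hHes.2, Prod.Lex.toLex_le_toLex, Prod.Lex.toLex_le_toLex, le_iff_lt_or_eq (a := b)]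

theorem HesProp.injective2 {Hes : Ordinal → Ordinal → Ordinal} (hHes : HesProp Hes)
    {a b c d : Ordinal} (h : Hes a b = Hes c d) : a = c ∧ b = d := by
  have := le_antisymm ((hHes.le_iff_toLex_le a b c d).1 h.le)
    ((hHes.le_iff_toLex_le c d a b).1 h.ge)
  simp only [toLex_inj, Prod.mk.injEq] at this
  exact this.2

theorem HesProp.lt_ord {Hes : Ordinal.{u} → Ordinal.{u} → Ordinal.{u}} (hHes : HesProp Hes)
    {κ : Cardinal.{u}} (hκ : Cardinal.aleph0 ≤ κ) {a b : Ordinal.{u}}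
    (ha : a < κ.ord) (hb : b < κ.ord) : Hes a b < κ.ord := by
  set m := max a b
  have hm : Order.succ m < κ.ord := (Cardinal.isSuccLimit_ord hκ).succ_lt (max_lt ha hb)
  have hsub :
      Set.Iio (Hes a b) ⊆ Set.image2 Hes (Set.Iio (Order.succ m)) (Set.Iio (Order.succ m)) := by
    intro δ hδ
    obtain ⟨c, d, rfl⟩ := hHes.1 δ
    have hmax : max c d ≤ m := by
      rcases (hHes.2 c d a b).1 (le_of_lt hδ) with h | ⟨h, _⟩
      exacts [h.le, h.le]
    exact ⟨c, Order.lt_succ_iff.2 ((le_max_left c d).trans hmax),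
      d, Order.lt_succ_iff.2 ((le_max_right c d).trans hmax), rfl⟩
  have hcard := (Cardinal.mk_le_mk_of_subset hsub).trans Cardinal.mk_image2_le
  simp only [Cardinal.mk_Iio_ordinal, ← Cardinal.lift_mul, Cardinal.lift_le] at hcard
  rw [Cardinal.lt_ord] at hm ⊢
  exact hcard.trans_lt (Cardinal.mul_lt_of_lt hκ hm hm)

namespace ISeq

variable {A : Type*}

theorem ext {s t : ISeq A} (hfst : s.1 = t.1)
    (hsnd : ∀ α (h : α < s.1) (h' : α < t.1), s.2 ⟨α, h⟩ = t.2 ⟨α, h'⟩) : s = t := by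
  obtain ⟨γ, f⟩ := s
  obtain ⟨δ, g⟩ := t
  obtain rfl : γ = δ := hfst
  obtain rfl : f = g := funext fun b => hsnd b.1 b.2 b.2
  rfl

theorem eq_of_fst_eq_zero {s t : ISeq A} (hs : s.1 = 0) (ht : t.1 = 0) : s = t :=
  ext (hs.trans ht.symm) fun _ h _ => (not_lt_zero (hs ▸ h)).elim

theorem cons_fst_ne_zero (a : A) (s : ISeq A) : (cons a s).1 ≠ 0 := by
  simp [cons]

theorem mnus_fst_eq_zero {w : ISeq A} (h : w.1 ≤ 1) : w.mnus.1 = 0 := by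
  rw [mnus, if_pos (h.trans_lt Ordinal.one_lt_omega0)]
  change min _ _ = 0
  rw [min_eq_left (Ordinal.sub_le_self _ _), Ordinal.sub_eq_zero_iff_le.2 h]

theorem one_add_mnus_fst {w : ISeq A} (hw : w.1 ≠ 0) : 1 + w.mnus.1 = w.1 := by
  unfold mnus
  split_ifs with hfin
  · change 1 + min _ _ = _
    rw [min_eq_left (Ordinal.sub_le_self _ _),
      Ordinal.add_sub_cancel_of_le (Order.one_le_iff_ne_zero.2 hw)]
  · exact Ordinal.one_add_of_omega0_le (not_lt.1 hfin)

theorem ext'_of_lt (s : ISeq Ordinal) {α : Ordinal} (h : α < s.1) : s.ext' α = s.2 ⟨α, h⟩ :=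
  dif_pos h

theorem ext'_of_not_lt (s : ISeq Ordinal) {α : Ordinal} (h : ¬α < s.1) : s.ext' α = 0 :=
  dif_neg h

theorem eq_of_ext'_eq {s t : ISeq Ordinal} (hfst : s.1 = t.1) (hext : s.ext' = t.ext') : s = t :=
  ext hfst fun α h h' => by rw [← ext'_of_lt s h, ← ext'_of_lt t h', hext]

theorem ext'_restr (s : ISeq Ordinal) {α δ : Ordinal} (h : α < δ) :
    (s.restr δ).ext' α = s.ext' α := by
  by_cases h' : α < s.1
  · rw [ext'_of_lt _ (show α < (s.restr δ).1 from lt_min h h'), ext'_of_lt s h']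
    rfl
  · rw [ext'_of_not_lt s h', ext'_of_not_lt _ fun h'' => h' (h''.trans_le (min_le_right δ s.1))]

theorem ext'_lt {s : ISeq Ordinal} {o : Ordinal} (ho : 0 < o) (hs : ∀ α, s.2 α < o)
    (α : Ordinal) : s.ext' α < o := by
  by_cases h : α < s.1
  · exact ext'_of_lt s h ▸ hs _
  · exact ext'_of_not_lt s h ▸ ho

end ISeq

theorem ExtOf.ext'_eq {s t : ISeq Ordinal} (h : ExtOf s t) {α : Ordinal} (hα : α < s.1) :
    t.ext' α = s.ext' α := by
  conv_rhs => rw [← h.2]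
  exact (ISeq.ext'_restr t hα).symm

section OplusPt

variable {Hes : Ordinal.{u} → Ordinal.{u} → Ordinal.{u}}
  {f f' g g' : Ordinal.{u} → Ordinal.{u}} {α : Ordinal.{u}}

theorem oplusPt_lt_ord (hHes : HesProp Hes) {κ : Cardinal.{u}} (hunc : Cardinal.aleph0 < κ)
    (hκ : κ.IsRegular) (hf : ∀ β ≤ α, f β < κ.ord) (hg : g α < κ.ord)
    (hα : α < κ.ord) : oplusPt Hes f g α < κ.ord := by
  have hlim := Cardinal.isSuccLimit_ord hκ.aleph0_le
  unfold oplusPt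
  split_ifs with h0
  · subst h0
    exact hlim.add_one_lt (hHes.lt_ord hκ.aleph0_le (hf 0 le_rfl) hg)
  · refine hlim.add_one_lt (hHes.lt_ord hκ.aleph0_le ?_ ?_)
    · exact Ordinal.isPrincipal_add_ord hκ.aleph0_le (hκ.sSup_image_Iic_lt_ord hf hα)
        (Cardinal.omega0_lt_ord.2 hunc)
    · exact hlim.add_one_lt (hHes.lt_ord hκ.aleph0_le (hf α le_rfl) hg)

theorem oplusPt_congr (hf : ∀ β ≤ α, f β = f' β) (hg : g α = g' α) :
    oplusPt Hes f g α = oplusPt Hes f' g' α := by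
  unfold oplusPt
  split_ifs with h0
  · subst h0
    rw [hf 0 le_rfl, hg]
  · rw [Set.image_congr (s := Set.Iic α) fun β hβ => hf β hβ, hf α le_rfl, hg]

theorem eq_of_oplusPt_eq (hHes : HesProp Hes) (h : oplusPt Hes f g α = oplusPt Hes f' g α) :
    f α = f' α := by
  unfold oplusPt at h
  split_ifs at h with h0
  · subst h0
    exact (hHes.injective2 (Order.succ_injective h)).1
  · exact (hHes.injective2 (Order.succ_injective (hHes.injective2 (Order.succ_injective h)).2)).1

end OplusPt

section Trees

variable {Hes : Ordinal → Ordinal → Ordinal} {κ : Cardinal} {T : Set Tri}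

theorem IsTree.fst_of_mem_hatT (hT : IsTree κ T) {a b : ISeq Bool} {s : ISeq Ordinal}
    (h : (a, b, s) ∈ hatT κ T) : a.1 = s.1 ∧ s.1 < κ.ord := by
  rcases h with h | ⟨w, hw, he⟩
  · obtain ⟨-, hlen, hlt, -⟩ := hT.1 _ h
    exact ⟨hlen, hlen ▸ hlt⟩
  · simp only [Prod.mk.injEq] at he
    obtain ⟨rfl, rfl, rfl⟩ := he
    exact ⟨rfl, hw⟩

theorem IsTree.fst_of_mem_STn (hT : IsTree κ T) (n : ℕ) {u v : ISeq Bool} {σ : ISeq Ordinal}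
    (h : (u, v, σ) ∈ STn Hes κ T n) :
    (u.1 = 0 ∧ σ.1 = 0) ∨ (σ.1 = 1 + u.mnus.1 ∧ u.mnus.1 < κ.ord) := by
  induction n generalizing u v σ with
  | zero =>
    rcases h with h | ⟨a, b, s, he, hm⟩
    · simp only [Set.mem_singleton_iff, emptyTri, Prod.mk.injEq] at h
      obtain ⟨rfl, -, rfl⟩ := h
      exact Or.inl ⟨rfl, rfl⟩
    · simp only [Prod.mk.injEq] at he
      obtain ⟨rfl, rfl, rfl⟩ := he
      obtain ⟨hlen, hlt⟩ := hT.fst_of_mem_hatT hm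
      exact Or.inr ⟨by rw [hlen]; rfl, hlen ▸ hlt⟩
  | succ n ih =>
    rcases h with (h | ⟨a, b, s, he, hm⟩) | ⟨a, b, s, t, he, c, hm, -⟩
    · simp only [Set.mem_singleton_iff, emptyTri, Prod.mk.injEq] at h
      obtain ⟨rfl, -, rfl⟩ := h
      exact Or.inl ⟨rfl, rfl⟩
    all_goals
      simp only [Prod.mk.injEq] at he
      obtain ⟨rfl, rfl, rfl⟩ := he
      exact Or.inr ((ih hm).resolve_left fun h0 => ISeq.cons_fst_ne_zero _ _ h0.2)

theorem mem_STn_of_mnus_eq (n : ℕ) {u v u' v' : ISeq Bool} {σ : ISeq Ordinal}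
    (h : (u, v, σ) ∈ STn Hes κ T n) (hσ : σ.1 ≠ 0) (hu : u'.mnus = u.mnus)
    (hv : v'.mnus = v.mnus) : (u', v', σ) ∈ STn Hes κ T n := by
  induction n generalizing u v u' v' σ with
  | zero =>
    rcases h with h | ⟨a, b, s, he, hm⟩
    · simp only [Set.mem_singleton_iff, emptyTri, Prod.mk.injEq] at h
      exact absurd (congrArg Sigma.fst h.2.2) hσ
    · simp only [Prod.mk.injEq] at he
      obtain ⟨rfl, rfl, rfl⟩ := he
      exact Or.inr ⟨u', v', s, rfl, hu ▸ hv ▸ hm⟩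
  | succ n ih =>
    rcases h with (h | ⟨a, b, s, he, hm⟩) | ⟨a, b, s, t, he, c, hm, hm'⟩
    · simp only [Set.mem_singleton_iff, emptyTri, Prod.mk.injEq] at h
      exact absurd (congrArg Sigma.fst h.2.2) hσ
    · simp only [Prod.mk.injEq] at he
      obtain ⟨rfl, rfl, rfl⟩ := he
      exact Or.inl (Or.inr ⟨u', v', s, rfl, ih hm (ISeq.cons_fst_ne_zero _ _) hu hv⟩)
    · simp only [Prod.mk.injEq] at he
      obtain ⟨rfl, rfl, rfl⟩ := he
      exact Or.inr ⟨u', v', s, t, rfl, c, ih hm (ISeq.cons_fst_ne_zero _ _) hu rfl,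
        ih hm' (ISeq.cons_fst_ne_zero _ _) rfl hv⟩

theorem emptyTri_mem_STfull : emptyTri ∈ STfull Hes κ T :=
  Set.mem_iUnion.2 ⟨0, Or.inl rfl⟩

end Trees

section PhiMap

variable {Hes : Ordinal.{u} → Ordinal.{u} → Ordinal.{u}} {κ : Cardinal.{u}}
  {ξ : KIdx κ → Ordinal.{u}}

theorem brO_ext'_lt (hκ : κ ≠ 0) (hξ : ∀ α, ξ α < κ.ord) (γ β : Ordinal) :
    (brO κ ξ γ).ext' β < κ.ord := by
  have hpos : 0 < κ.ord := Cardinal.ord_pos.2 (pos_iff_ne_zero.2 hκ)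
  refine ISeq.ext'_lt hpos (fun α => ?_) β
  change dite _ _ _ < _
  split_ifs
  exacts [hξ _, hpos]

theorem brO_ext'_eq {γ γ' β : Ordinal} (h : β < γ) (h' : β < γ') :
    (brO κ ξ γ).ext' β = (brO κ ξ γ').ext' β := by
  rw [ISeq.ext'_of_lt _ (show β < (brO κ ξ γ).1 from h),
    ISeq.ext'_of_lt _ (show β < (brO κ ξ γ').1 from h')]
  rfl

@[simp]
theorem phiMap_fst (s : ISeq Ordinal) : (phiMap Hes κ ξ s).1 = s.1 := rfl

theorem phiMap_ext' {s : ISeq Ordinal} {α : Ordinal} (h : α < s.1) :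
    (phiMap Hes κ ξ s).ext' α = oplusPt Hes s.ext' (brO κ ξ s.1).ext' α :=
  ISeq.ext'_of_lt (phiMap Hes κ ξ s) h

theorem phiMap_inDom (hHes : HesProp Hes) (hunc : Cardinal.aleph0 < κ) (hκ : κ.IsRegular)
    (hξ : ∀ α, ξ α < κ.ord) {s : ISeq Ordinal} (hs : InDom κ s) :
    InDom κ (phiMap Hes κ ξ s) := by
  refine ⟨hs.1, fun α => ?_⟩
  have hpos : 0 < κ.ord := hκ.ord_pos
  exact oplusPt_lt_ord hHes hunc hκ (fun β _ => ISeq.ext'_lt hpos hs.2 β)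
    (brO_ext'_lt hκ.ne_zero hξ _ _) (α.2.trans hs.1)

theorem phiMap_extOf {s t : ISeq Ordinal} (h : ExtOf s t) :
    ExtOf (phiMap Hes κ ξ s) (phiMap Hes κ ξ t) := by
  refine ⟨h.1, ISeq.eq_of_ext'_eq (min_eq_left h.1) (funext fun α => ?_)⟩
  by_cases hα : α < s.1
  · rw [ISeq.ext'_restr _ (show α < (phiMap Hes κ ξ s).1 from hα),
      phiMap_ext' (hα.trans_le h.1), phiMap_ext' hα]
    exact oplusPt_congr (fun β hβ => h.ext'_eq (hβ.trans_lt hα))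
      (brO_ext'_eq (hα.trans_le h.1) hα)
  · rw [ISeq.ext'_of_not_lt _ (show ¬α < (phiMap Hes κ ξ s).1 from hα),
      ISeq.ext'_of_not_lt _ fun h' => hα (h'.trans_le (min_le_left _ _))]

theorem phiMap_injective (hHes : HesProp Hes) : Function.Injective (phiMap Hes κ ξ) := by
  intro s t h
  have hfst : s.1 = t.1 := by simpa only [phiMap_fst] using congrArg Sigma.fst h
  refine ISeq.eq_of_ext'_eq hfst (funext fun α => ?_)
  by_cases hα : α < s.1
  · have hval := congrFun (congrArg ISeq.ext' h) α
    rw [phiMap_ext' hα, phiMap_ext' (hfst ▸ hα), ← hfst] at hval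
    exact eq_of_oplusPt_eq hHes hval
  · rw [ISeq.ext'_of_not_lt s hα, ISeq.ext'_of_not_lt t (hfst ▸ hα)]

theorem phiMap_isLipInj (hHes : HesProp Hes) (hunc : Cardinal.aleph0 < κ) (hκ : κ.IsRegular)
    (hξ : ∀ α, ξ α < κ.ord) : IsLipInj κ (phiMap Hes κ ξ) :=
  ⟨fun _ => phiMap_inDom hHes hunc hκ hξ, fun _ _ => rfl, fun _ _ _ _ => phiMap_extOf,
    fun _ _ _ _ h => phiMap_injective hHes h⟩

theorem sharp_le_sharp_phiMap (hκ : κ ≠ 0) (hξ : ∀ α, ξ α < κ.ord)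
    {sharp : Ordinal → (Ordinal → Ordinal) → Ordinal}
    (hsharp_ext : ∀ γ : Ordinal, ∀ s s' : Ordinal → Ordinal,
      (∀ α < γ + 1, s α = s' α) → sharp γ s = sharp γ s')
    (hsharp_mono : ∀ γ < κ.ord, ∀ s t : Ordinal → Ordinal,
      (∀ α < γ + 1, s α < κ.ord) → (∀ α < γ + 1, t α < κ.ord) →
      sharp γ s ≤ sharp γ (oplusPt Hes s t))
    {s : ISeq Ordinal} {γ : Ordinal} (hs : InDom κ s) (hγ : s.1 = γ + 1) :
    sharp γ s.ext' ≤ sharp γ (phiMap Hes κ ξ s).ext' := by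
  have hγκ : γ < κ.ord := (Order.lt_add_one_iff.2 le_rfl).trans (hγ ▸ hs.1)
  rw [hsharp_ext γ (phiMap Hes κ ξ s).ext' _ fun α hα => phiMap_ext' (hγ ▸ hα)]
  exact hsharp_mono γ hγκ _ _
    (fun α _ => ISeq.ext'_lt (Cardinal.ord_pos.2 (pos_iff_ne_zero.2 hκ)) hs.2 α)
    (fun α _ => brO_ext'_lt hκ hξ _ α)

end PhiMap

section Reduction

variable {Hes : Ordinal.{u} → Ordinal.{u} → Ordinal.{u}} {κ : Cardinal.{u}} {T : Set Tri}

theorem mem_STfull_brB_zero {x y : KIdx κ → Bool} {ξ : KIdx κ → Ordinal.{u}}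
    (h : (brB κ x 1, brB κ y 1, brO κ ξ 1) ∈ STfull Hes κ T) :
    (brB κ x 0, brB κ y 0, brO κ ξ 1) ∈ STfull Hes κ T := by
  have hmnus : ∀ z : KIdx κ → Bool, (brB κ z 0).mnus = (brB κ z 1).mnus := fun z =>
    ISeq.eq_of_fst_eq_zero (ISeq.mnus_fst_eq_zero zero_le_one) (ISeq.mnus_fst_eq_zero le_rfl)
  obtain ⟨n, hn⟩ := Set.mem_iUnion.1 h
  exact Set.mem_iUnion.2 ⟨n, mem_STn_of_mnus_eq n hn one_ne_zero (hmnus x) (hmnus y)⟩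

theorem phiMap_mem_STx (hT : IsTree κ T) (hκ : Cardinal.aleph0 ≤ κ)
    (hT3 : ∀ (u v w : ISeq Bool) (s t : ISeq Ordinal),
      (u, v, s) ∈ STfull Hes κ T → (v, w, t) ∈ STfull Hes κ T →
      (u, w, oplusSeq Hes s t) ∈ STfull Hes κ T)
    {x y : KIdx κ → Bool} {ξ : KIdx κ → Ordinal.{u}}
    (hbody : ∀ γ < κ.ord, (brB κ x γ, brB κ y γ, brO κ ξ γ) ∈ STfull Hes κ T)
    {u : ISeq Bool} {s : ISeq Ordinal} (h : (u, s) ∈ STx Hes κ T x) :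
    (u, phiMap Hes κ ξ s) ∈ STx Hes κ T y := by
  change (u, brB κ x u.1, s) ∈ STfull Hes κ T at h
  change (u, brB κ y u.1, oplusSeq Hes s (brO κ ξ s.1)) ∈ STfull Hes κ T
  have hone : (1 : Ordinal) < κ.ord :=
    Ordinal.one_lt_omega0.trans_le (Cardinal.omega0_le_ord.2 hκ)
  obtain ⟨n, hn⟩ := Set.mem_iUnion.1 h
  rcases hT.fst_of_mem_STn n hn with ⟨hu, hs⟩ | ⟨hs, hκs⟩
  · convert (emptyTri_mem_STfull : emptyTri ∈ STfull Hes κ T) using 1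
    exact Prod.ext (ISeq.eq_of_fst_eq_zero hu rfl)
      (Prod.ext (ISeq.eq_of_fst_eq_zero hu rfl) (ISeq.eq_of_fst_eq_zero hs rfl))
  refine hT3 _ _ _ _ _ h ?_
  -- For `u` empty, `s` has length one, since `S_T^0` is built from `(u⁻, v⁻, s)`.
  by_cases hu : u.1 = 0
  · rw [hs, ISeq.mnus_fst_eq_zero (hu.trans_le zero_le_one), add_zero, hu]
    exact mem_STfull_brB_zero (hbody 1 hone)
  · rw [hs, ISeq.one_add_mnus_fst hu]
    refine hbody u.1 ?_
    rw [← ISeq.one_add_mnus_fst hu]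
    exact Ordinal.isPrincipal_add_ord hκ hone hκs

end Reduction

section LeMax

variable {κ : Cardinal.{u}}

theorem inDom_zseq (hκ : κ ≠ 0) {γ : Ordinal} (hγ : γ < κ.ord) : InDom κ (zseq γ) :=
  ⟨hγ, fun _ => Cardinal.ord_pos.2 (pos_iff_ne_zero.2 hκ)⟩

/-- The branch `⋃_{γ < κ} φ(0^{(γ)})`. -/
def zseqImageBranch (κ : Cardinal.{u}) (φ : ISeq Ordinal.{u} → ISeq Ordinal.{u}) :
    KIdx κ → Ordinal.{u} :=
  fun α => (φ (zseq (α.1 + 1))).ext' α.1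

theorem IsLipInj.apply_zseq {φ : ISeq Ordinal → ISeq Ordinal} (hφ : IsLipInj κ φ)
    (hκ : Cardinal.aleph0 ≤ κ) {γ : Ordinal} (hγ : γ < κ.ord) :
    φ (zseq γ) = brO κ (zseqImageBranch κ φ) γ := by
  have hκ0 : κ ≠ 0 := (Cardinal.aleph0_pos.trans_le hκ).ne'
  refine ISeq.eq_of_ext'_eq (hφ.2.1 _ (inDom_zseq hκ0 hγ)) (funext fun α => ?_)
  by_cases hα : α < γ
  · rw [ISeq.ext'_of_lt (brO κ _ γ) (show α < (brO κ _ γ).1 from hα)]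
    change _ = dite _ _ _
    rw [dif_pos (hα.trans hγ)]
    have hα1 : α + 1 ≤ γ := Order.add_one_le_of_lt hα
    have hdom : InDom κ (zseq (α + 1)) := inDom_zseq hκ0 (hα1.trans_lt hγ)
    have hext : ExtOf (zseq (α + 1)) (zseq γ) :=
      ⟨hα1, ISeq.ext (min_eq_left hα1) fun _ _ _ => rfl⟩
    refine (hφ.2.2.1 _ _ hdom (inDom_zseq hκ0 hγ) hext).ext'_eq ?_
    rw [hφ.2.1 _ hdom]
    exact Order.lt_add_one_iff.2 le_rfl
  · rw [ISeq.ext'_of_not_lt _ (by rwa [hφ.2.1 _ (inDom_zseq hκ0 hγ)]),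
      ISeq.ext'_of_not_lt (brO κ _ γ) (show ¬α < (brO κ _ γ).1 from hα)]

theorem projT_STfull_of_leMax {Hes : Ordinal.{u} → Ordinal.{u} → Ordinal.{u}} {T : Set Tri}
    (hκ : Cardinal.aleph0 ≤ κ)
    (hT2a : ∀ u : ISeq Bool, u.1 < κ.ord → (u, u, zseq u.1) ∈ STfull Hes κ T)
    {x y : KIdx κ → Bool} (h : LeMax κ (STx Hes κ T x) (STx Hes κ T y)) :
    projT κ (STfull Hes κ T) x y := by
  obtain ⟨φ, hφ, hmap⟩ := h
  have hκ0 : κ ≠ 0 := (Cardinal.aleph0_pos.trans_le hκ).ne'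
  refine ⟨zseqImageBranch κ φ, fun α => ?_, fun γ hγ => ?_⟩
  · have hα1 : α.1 + 1 < κ.ord := (Cardinal.isSuccLimit_ord hκ).add_one_lt α.2
    exact ISeq.ext'_lt (Cardinal.ord_pos.2 (pos_iff_ne_zero.2 hκ0))
      (hφ.1 _ (inDom_zseq hκ0 hα1)).2 _
  · rw [← hφ.apply_zseq hκ hγ]
    exact hmap _ _ (hT2a (brB κ x γ) hγ)

end LeMax

theorem stmt4_general (κ : Cardinal) (hunc : Cardinal.aleph0 < κ) (hks : κ ^< κ = κ)
    (Hes : Ordinal → Ordinal → Ordinal) (hHes : HesProp Hes)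
    (sharp : Ordinal → (Ordinal → Ordinal) → Ordinal)
    (hsharp_ext : ∀ γ : Ordinal, ∀ s s' : Ordinal → Ordinal,
      (∀ α < γ + 1, s α = s' α) → sharp γ s = sharp γ s')
    (hsharp_mono : ∀ γ < κ.ord, ∀ s t : Ordinal → Ordinal,
      (∀ α < γ + 1, s α < κ.ord) → (∀ α < γ + 1, t α < κ.ord) →
      sharp γ s ≤ sharp γ (oplusPt Hes s t))
    (R : (KIdx κ → Bool) → (KIdx κ → Bool) → Prop)
    (T : Set Tri) (hT : IsTree κ T)
    (hT2a : ∀ u : ISeq Bool, u.1 < κ.ord → (u, u, zseq u.1) ∈ STfull Hes κ T)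
    (hT3 : ∀ (u v w : ISeq Bool) (s t : ISeq Ordinal),
      (u, v, s) ∈ STfull Hes κ T → (v, w, t) ∈ STfull Hes κ T →
      (u, w, oplusSeq Hes s t) ∈ STfull Hes κ T)
    (hT5 : ∀ x y, R x y ↔ projT κ (STfull Hes κ T) x y) :
    (∀ x y, LeMax κ (STx Hes κ T x) (STx Hes κ T y) → R x y) ∧
    (∀ x y (ξ : KIdx κ → Ordinal), (∀ α, ξ α < κ.ord) →
      (∀ γ : Ordinal, γ < κ.ord → (brB κ x γ, brB κ y γ, brO κ ξ γ) ∈ STfull Hes κ T) →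
      IsLipInj κ (phiMap Hes κ ξ) ∧
      (∀ u s, (u, s) ∈ STx Hes κ T x → (u, phiMap Hes κ ξ s) ∈ STx Hes κ T y) ∧
      (∀ (s : ISeq Ordinal) (γ : Ordinal), InDom κ s → s.1 = γ + 1 →
        sharp γ s.ext' ≤ sharp γ (phiMap Hes κ ξ s).ext')) ∧
    (∀ x y, R x y ↔ LeMax κ (STx Hes κ T x) (STx Hes κ T y)) := by
  have hκ : κ.IsRegular := Cardinal.isRegular_of_powerlt_self hunc.le hks
  have reflects : ∀ x y, LeMax κ (STx Hes κ T x) (STx Hes κ T y) → R x y :=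
    fun x y h => (hT5 x y).2 (projT_STfull_of_leMax hκ.aleph0_le hT2a h)
  refine ⟨reflects, fun x y ξ hξ hbody => ⟨phiMap_isLipInj hHes hunc hκ hξ,
      fun _ _ => phiMap_mem_STx hT hκ.aleph0_le hT3 hbody,
      fun _ _ hs hγ => sharp_le_sharp_phiMap hκ.ne_zero hξ hsharp_ext hsharp_mono hs hγ⟩,
    fun x y => ⟨fun hxy => ?_, reflects x y⟩⟩
  obtain ⟨ξ, hξ, hbody⟩ := (hT5 x y).1 hxy
  exact ⟨phiMap Hes κ ξ, phiMap_isLipInj hHes hunc hκ hξ,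
    fun _ _ => phiMap_mem_STx hT hκ.aleph0_le hT3 hbody⟩

/-- Let `κ` be uncountable with `κ^{<κ} = κ`, `R` an analytic quasi-order on `^κ2`,
`T` a DST-tree on `2 × 2 × κ` in normal form for `R` (properties (i)–(v)), and `#` a
map as in Proposition `⊕`(2).  Then for all `x, y ∈ ^κ2`:
(1) `S_T^x ≤_max S_T^y` implies `x R y`;
(2) if `(x, y, ξ) ∈ [S_T]` then `φ(s) = s ⊕ (ξ↾lh s)` is Lipschitz injective,
witnesses `S_T^x ≤_max S_T^y`, and `#s ≤ #(φ s)` for `s` of successor length;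
in particular (3) `x R y ↔ S_T^x ≤_max S_T^y`. -/
theorem stmt4 (κ : Cardinal) (hunc : Cardinal.aleph0 < κ) (hks : κ ^< κ = κ)
    (Hes : Ordinal → Ordinal → Ordinal) (hHes : HesProp Hes)
    (sharp : Ordinal → (Ordinal → Ordinal) → Ordinal)
    (hsharp_ext : ∀ γ : Ordinal, ∀ s s' : Ordinal → Ordinal,
      (∀ α < γ + 1, s α = s' α) → sharp γ s = sharp γ s')
    (hsharp_mono : ∀ γ < κ.ord, ∀ s t : Ordinal → Ordinal,
      (∀ α < γ + 1, s α < κ.ord) → (∀ α < γ + 1, t α < κ.ord) →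
      sharp γ s ≤ sharp γ (oplusPt Hes s t))
    (hsharp_bij : ∀ γ < κ.ord,
      (∀ s : Ordinal → Ordinal, (∀ α < γ + 1, s α < κ.ord) → sharp γ s < κ.ord) ∧
      (∀ s s' : Ordinal → Ordinal, (∀ α < γ + 1, s α < κ.ord) →
        (∀ α < γ + 1, s' α < κ.ord) → sharp γ s = sharp γ s' → ∀ α < γ + 1, s α = s' α) ∧
      (∀ δ < κ.ord, ∃ s : Ordinal → Ordinal,
        (∀ α < γ + 1, s α < κ.ord) ∧ sharp γ s = δ))
    (R : (KIdx κ → Bool) → (KIdx κ → Bool) → Prop)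
    (hrefl : ∀ x, R x x) (htrans : ∀ x y z, R x y → R y z → R x z)
    (T : Set Tri) (hT : IsTree κ T)
    (hRT : ∀ x y, R x y ↔ projT κ T x y)
    (hT1 : ∀ (t : ISeq Ordinal) (u v u' v' : ISeq Bool),
      (u, v, t) ∈ T → (u', v', t) ∈ T → u = u' ∧ v = v')
    (hT2a : ∀ u : ISeq Bool, u.1 < κ.ord → (u, u, zseq u.1) ∈ STfull Hes κ T)
    (hT2b : ∀ u v : ISeq Bool, u.1 < κ.ord → v.1 < κ.ord →
      (u, v, zseq u.1) ∈ STfull Hes κ T → Ordinal.omega0 ≤ u.1 → u = v)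
    (hT3 : ∀ (u v w : ISeq Bool) (s t : ISeq Ordinal),
      (u, v, s) ∈ STfull Hes κ T → (v, w, t) ∈ STfull Hes κ T →
      (u, w, oplusSeq Hes s t) ∈ STfull Hes κ T)
    (hT4 : ∀ s : ISeq Ordinal, s.1 < κ.ord → (∀ α, s.2 α < κ.ord) →
      Ordinal.omega0 ≤ s.1 → s ≠ zseq s.1 →
      {p : ISeq Bool × ISeq Bool | p.1 ≠ p.2 ∧ (p.1, p.2, s) ∈ STfull Hes κ T}.Finite)
    (hT5 : ∀ x y, R x y ↔ projT κ (STfull Hes κ T) x y) :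
    (∀ x y, LeMax κ (STx Hes κ T x) (STx Hes κ T y) → R x y) ∧
    (∀ x y (ξ : KIdx κ → Ordinal), (∀ α, ξ α < κ.ord) →
      (∀ γ : Ordinal, γ < κ.ord → (brB κ x γ, brB κ y γ, brO κ ξ γ) ∈ STfull Hes κ T) →
      IsLipInj κ (phiMap Hes κ ξ) ∧
      (∀ u s, (u, s) ∈ STx Hes κ T x → (u, phiMap Hes κ ξ s) ∈ STx Hes κ T y) ∧
      (∀ (s : ISeq Ordinal) (γ : Ordinal), InDom κ s → s.1 = γ + 1 →
        sharp γ s.ext' ≤ sharp γ (phiMap Hes κ ξ s).ext')) ∧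
    (∀ x y, R x y ↔ LeMax κ (STx Hes κ T x) (STx Hes κ T y)) :=
  stmt4_general κ hunc hks Hes hHes sharp hsharp_ext hsharp_mono R T hT hT2a hT3 hT5
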